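/- arXiv:2411.08922 — 3 statements merged into one kernel-verified Lean document; each statement's English description precedes it below -/
import Mathlib

section
/- Let 0 < α < 1, T > 0, and let η be absolutely continuous on [0,T]. Then for every 0 < t ≤ T, the Caputo fractional derivative of order α of the function t ↦ ∫_0^t η(s) (t−s)^{α−1} ds satisfies ∂_t^α ∫_0^t η(s) (t−s)^{α−1} ds = Γ(α) η(t). -/
/-! Write `A^α f (t) = ∫₀ᵗ f(s) (t - s)^(α-1) ds`. Fubini on the triangle `0 < r < s < t` and the
Beta integral give the semigroup law `A^β (A^α f) = B(α, β) A^(α+β) f` for integrable `f` when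
`α + β ≥ 1`. Applied to `η = η(0) + A^1 η'`, the law shows that `A^α η` is the primitive of
`φ(s) = η(0) s^(α-1) + A^α η' (s)`, so by Lebesgue's differentiation theorem its derivative is `φ`
almost everywhere. The Caputo derivative is then
`Γ(1-α)⁻¹ A^(1-α) φ (t) = Γ(1-α)⁻¹ B(α, 1-α) (η(0) + A^1 η' (t)) = Γ(α) η(t)`. -/

open MeasureTheory Set

/-- The Caputo fractional derivative of order `α ∈ (0,1)` of `u` at time `t`:
`∂_t^α u(t) = (1/Γ(1−α)) ∫_0^t u'(s) (t−s)^{−α} ds`. -/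
noncomputable def caputoDeriv (α : ℝ) (u : ℝ → ℝ) (t : ℝ) : ℝ :=
  (Real.Gamma (1 - α))⁻¹ * ∫ s in (0:ℝ)..t, deriv u s * (t - s) ^ (-α)

/-- A function `f` is absolutely continuous on `[a,b]` iff there is an integrable `f'`
on `[a,b]` with `f x = f a + ∫_a^x f'(t) dt` for all `x ∈ [a,b]`. -/
def AbsContOn (f : ℝ → ℝ) (a b : ℝ) : Prop :=
  ∃ f' : ℝ → ℝ, IntegrableOn f' (Icc a b) ∧
    ∀ x ∈ Icc a b, f x = f a + ∫ t in a..x, f' t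

open Filter Function
open ProbabilityTheory (beta)

section Kernel

variable {α β r τ : ℝ}

lemma integrableOn_sub_rpow (hβ : -1 < β) : IntegrableOn (fun s => (s - r) ^ β) (Ioc r τ) := by
  rcases le_or_gt τ r with hτr | hrτ
  · simp [Ioc_eq_empty_of_le hτr]
  · have := (intervalIntegral.intervalIntegrable_rpow' (a := 0) (b := τ - r) hβ).comp_sub_right r
    rwa [zero_add, sub_add_cancel, intervalIntegrable_iff_integrableOn_Ioc_of_le hrτ.le] at this

lemma integrableOn_rpow_sub (hβ : -1 < β) : IntegrableOn (fun s => (τ - s) ^ β) (Ioc r τ) := by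
  rcases le_or_gt τ r with hτr | hrτ
  · simp [Ioc_eq_empty_of_le hτr]
  · have := (intervalIntegral.intervalIntegrable_rpow' (a := 0) (b := τ - r) hβ).comp_sub_left τ
    rwa [sub_zero, sub_sub_cancel, IntervalIntegrable.symm_iff,
      intervalIntegrable_iff_integrableOn_Ioc_of_le hrτ.le] at this

lemma integrableOn_sub_rpow_mul_rpow_sub (hα : 0 < α) (hβ : 0 < β) :
    IntegrableOn (fun s => (s - r) ^ (α - 1) * (τ - s) ^ (β - 1)) (Ioc r τ) := by
  rcases le_or_gt τ r with hτr | hrτ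
  · simp [Ioc_eq_empty_of_le hτr]
  obtain ⟨m, hrm, hmτ⟩ := exists_between hrτ
  rw [← Ioc_union_Ioc_eq_Ioc hrm.le hmτ.le]
  refine IntegrableOn.union ?_ ?_
  · refine (integrableOn_sub_rpow (by linarith)).mul_continuousOn_of_subset ?_
      measurableSet_Ioc isCompact_Icc Ioc_subset_Icc_self
    exact ContinuousOn.rpow_const (by fun_prop) fun s hs => Or.inl (by linarith [hs.2])
  · refine IntegrableOn.continuousOn_mul_of_subset ?_ (integrableOn_rpow_sub (by linarith))
      isCompact_Icc measurableSet_Ioc Ioc_subset_Icc_self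
    exact ContinuousOn.rpow_const (by fun_prop) fun s hs => Or.inl (by linarith [hs.1])

lemma integral_rpow_mul_rpow_sub (hα : 0 < α) (hβ : 0 < β) {c : ℝ} (hc : 0 < c) :
    ∫ x in (0:ℝ)..c, x ^ (α - 1) * (c - x) ^ (β - 1) = c ^ (α + β - 1) * beta α β := by
  have hB : Complex.betaIntegral α β = (beta α β : ℂ) := by
    rw [Complex.betaIntegral_eq_Gamma_mul_div _ _ (by simpa) (by simpa), beta]
    push_cast [← Complex.ofReal_add, Complex.Gamma_ofReal]
    rfl
  apply Complex.ofReal_injective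
  rw [← intervalIntegral.integral_ofReal, Complex.ofReal_mul, ← hB, Complex.ofReal_cpow hc.le]
  push_cast
  rw [← Complex.betaIntegral_scaled α β hc]
  refine intervalIntegral.integral_congr fun x hx => ?_
  rw [uIcc_of_le hc.le] at hx
  push_cast [Complex.ofReal_cpow hx.1, Complex.ofReal_cpow (sub_nonneg.mpr hx.2)]
  rfl

lemma setIntegral_sub_rpow_mul_rpow_sub (hα : 0 < α) (hβ : 0 < β) (hrτ : r < τ) :
    ∫ s in Ioc r τ, (s - r) ^ (α - 1) * (τ - s) ^ (β - 1) = (τ - r) ^ (α + β - 1) * beta α β := by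
  have hshift := intervalIntegral.integral_comp_sub_right
    (fun x => x ^ (α - 1) * (τ - r - x) ^ (β - 1)) (a := r) (b := τ) r
  simp only [sub_self, sub_sub_sub_cancel_right] at hshift
  rw [← integral_rpow_mul_rpow_sub hα hβ (sub_pos.mpr hrτ), ← hshift,
    intervalIntegral.integral_of_le hrτ.le]

end Kernel

section Triangle

variable {a b : ℝ} {H : ℝ → ℝ → ℝ}

lemma setIntegral_Ioc_indicator_Ioi {F : ℝ → ℝ} {r : ℝ} (hr : a ≤ r) :
    ∫ s in Ioc a b, (Ioi r).indicator F s = ∫ s in Ioc r b, F s := by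
  rw [setIntegral_indicator measurableSet_Ioi, Ioc_inter_Ioi, max_eq_right hr]

lemma setIntegral_Ioc_indicator_Iio {F : ℝ → ℝ} {s : ℝ} (hs : s ≤ b) :
    ∫ r in Ioc a b, (Iio s).indicator F r = ∫ r in Ioc a s, F r := by
  rw [setIntegral_indicator measurableSet_Iio, integral_Ioc_eq_integral_Ioo]
  congr 2
  ext r
  simp only [mem_inter_iff, mem_Ioc, mem_Iio, mem_Ioo]
  grind

lemma indicator_triangle_eq_indicator_Ioi (r s : ℝ) :
    {p : ℝ × ℝ | p.1 < p.2}.indicator (uncurry H) (r, s) = (Ioi r).indicator (H r) s := by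
  simp [indicator_apply]

lemma indicator_triangle_eq_indicator_Iio (r s : ℝ) :
    {p : ℝ × ℝ | p.1 < p.2}.indicator (uncurry H) (r, s) = (Iio s).indicator (H · s) r := by
  simp [indicator_apply]

lemma integrable_indicator_triangle
    (hH : AEStronglyMeasurable (uncurry H)
      ((volume.restrict (Ioc a b)).prod (volume.restrict (Ioc a b))))
    (hint : ∀ᵐ r ∂volume.restrict (Ioc a b), IntegrableOn (H r) (Ioc r b))
    (hnorm : IntegrableOn (fun r => ∫ s in Ioc r b, ‖H r s‖) (Ioc a b)) :
    Integrable ({p : ℝ × ℝ | p.1 < p.2}.indicator (uncurry H))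
      ((volume.restrict (Ioc a b)).prod (volume.restrict (Ioc a b))) := by
  rw [integrable_prod_iff (hH.indicator (measurableSet_lt measurable_fst measurable_snd))]
  refine ⟨?_, ?_⟩
  · filter_upwards [hint, ae_restrict_mem measurableSet_Ioc] with r hr hra
    simp only [indicator_triangle_eq_indicator_Ioi]
    rw [integrable_indicator_iff measurableSet_Ioi, IntegrableOn,
      Measure.restrict_restrict measurableSet_Ioi, inter_comm, Ioc_inter_Ioi,
      max_eq_right hra.1.le]
    exact hr
  · refine hnorm.congr ?_
    filter_upwards [ae_restrict_mem measurableSet_Ioc] with r hr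
    rw [← setIntegral_Ioc_indicator_Ioi (a := a) hr.1.le]
    simp only [indicator_triangle_eq_indicator_Ioi, norm_indicator_eq_indicator_norm]

lemma integrableOn_setIntegral_Ioc_triangle
    (hG : Integrable ({p : ℝ × ℝ | p.1 < p.2}.indicator (uncurry H))
      ((volume.restrict (Ioc a b)).prod (volume.restrict (Ioc a b)))) :
    IntegrableOn (fun s => ∫ r in Ioc a s, H r s) (Ioc a b) := by
  refine hG.swap.integral_prod_left.congr ?_
  filter_upwards [ae_restrict_mem measurableSet_Ioc] with s hs
  simp only [comp_apply, Prod.swap_prod_mk, indicator_triangle_eq_indicator_Iio]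
  exact setIntegral_Ioc_indicator_Iio hs.2

lemma integral_Ioc_triangle_swap
    (hG : Integrable ({p : ℝ × ℝ | p.1 < p.2}.indicator (uncurry H))
      ((volume.restrict (Ioc a b)).prod (volume.restrict (Ioc a b)))) :
    ∫ s in Ioc a b, ∫ r in Ioc a s, H r s = ∫ r in Ioc a b, ∫ s in Ioc r b, H r s := by
  set G : ℝ → ℝ → ℝ := fun r s => {p : ℝ × ℝ | p.1 < p.2}.indicator (uncurry H) (r, s)
  calc ∫ s in Ioc a b, ∫ r in Ioc a s, H r s
      = ∫ s in Ioc a b, ∫ r in Ioc a b, G r s :=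
        setIntegral_congr_fun measurableSet_Ioc fun s hs => by
          simp only [G, indicator_triangle_eq_indicator_Iio, setIntegral_Ioc_indicator_Iio hs.2]
    _ = ∫ r in Ioc a b, ∫ s in Ioc a b, G r s := (integral_integral_swap (f := G) hG).symm
    _ = ∫ r in Ioc a b, ∫ s in Ioc r b, H r s :=
        setIntegral_congr_fun measurableSet_Ioc fun r hr => by
          simp only [G, indicator_triangle_eq_indicator_Ioi, setIntegral_Ioc_indicator_Ioi hr.1.le]

end Triangle

lemma ae_deriv_eq_of_eqOn_integral {u φ : ℝ → ℝ} {a b : ℝ} (hφ : IntervalIntegrable φ volume a b)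
    (hu : EqOn u (fun x => ∫ s in a..x, φ s) (Ioo a b)) :
    ∀ᵐ x, x ∈ Ioo a b → deriv u x = φ x := by
  filter_upwards [hφ.ae_hasDerivAt_integral] with x hx hxab
  have hderiv := hx (Ioo_subset_Icc_self.trans Icc_subset_uIcc hxab) a left_mem_uIcc
  rw [(hu.eventuallyEq_of_mem (Ioo_mem_nhds hxab.1 hxab.2)).deriv_eq, hderiv.deriv]

/-- The Riemann–Liouville integral of order `α`, without the normalising factor `1 / Γ(α)`. -/
noncomputable def abelIntegral (α : ℝ) (f : ℝ → ℝ) (t : ℝ) : ℝ :=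
  ∫ s in (0:ℝ)..t, f s * (t - s) ^ (α - 1)

section Abel

variable {α β τ c : ℝ} {f : ℝ → ℝ}

lemma abelIntegral_one (f : ℝ → ℝ) (t : ℝ) : abelIntegral 1 f t = ∫ s in (0:ℝ)..t, f s := by
  simp [abelIntegral]

lemma abelIntegral_mul_rpow_sub {s : ℝ} (hs : 0 ≤ s) :
    abelIntegral α f s * (τ - s) ^ (β - 1)
      = ∫ r in Ioc 0 s, f r * ((s - r) ^ (α - 1) * (τ - s) ^ (β - 1)) := by
  simp only [abelIntegral, intervalIntegral.integral_of_le hs, ← integral_mul_const, mul_assoc]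

lemma integrable_indicator_triangle_abelKernel (hα : 0 < α) (hβ : 0 < β) (hαβ : 1 ≤ α + β)
    (hf : IntegrableOn f (Ioc 0 τ)) :
    Integrable ({p : ℝ × ℝ | p.1 < p.2}.indicator
        (uncurry fun r s => f r * ((s - r) ^ (α - 1) * (τ - s) ^ (β - 1))))
      ((volume.restrict (Ioc 0 τ)).prod (volume.restrict (Ioc 0 τ))) := by
  refine integrable_indicator_triangle ?_ ?_ ?_
  · exact hf.aestronglyMeasurable.comp_fst.mul (Measurable.aestronglyMeasurable (by fun_prop))
  · exact ae_of_all _ fun r => (integrableOn_sub_rpow_mul_rpow_sub hα hβ).const_mul (f r)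
  · have hbound :
        IntegrableOn (fun r => ‖f r‖ * ((τ - r) ^ (α + β - 1) * beta α β)) (Ioc 0 τ) := by
      refine IntegrableOn.mul_continuousOn_of_subset hf.norm ?_ measurableSet_Ioc isCompact_Icc
        Ioc_subset_Icc_self
      exact (ContinuousOn.rpow_const (by fun_prop) fun _ _ => Or.inr (by linarith)).mul
        continuousOn_const
    refine hbound.congr ?_
    filter_upwards [ae_restrict_mem measurableSet_Ioc, Measure.ae_ne _ τ] with r hr hrτ
    have hkernel : ∀ s ∈ Ioc r τ, ‖f r * ((s - r) ^ (α - 1) * (τ - s) ^ (β - 1))‖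
        = ‖f r‖ * ((s - r) ^ (α - 1) * (τ - s) ^ (β - 1)) := fun s hs => by
      have hK : 0 ≤ (s - r) ^ (α - 1) * (τ - s) ^ (β - 1) :=
        mul_nonneg (Real.rpow_nonneg (by linarith [hs.1]) _)
          (Real.rpow_nonneg (by linarith [hs.2]) _)
      rw [norm_mul, Real.norm_of_nonneg hK]
    rw [setIntegral_congr_fun measurableSet_Ioc hkernel, integral_const_mul,
      setIntegral_sub_rpow_mul_rpow_sub hα hβ (lt_of_le_of_ne hr.2 hrτ)]

lemma intervalIntegrable_abelIntegral_mul_rpow_sub (hα : 0 < α) (hβ : 0 < β) (hαβ : 1 ≤ α + β)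
    (hτ : 0 ≤ τ) (hf : IntegrableOn f (Ioc 0 τ)) :
    IntervalIntegrable (fun s => abelIntegral α f s * (τ - s) ^ (β - 1)) volume 0 τ := by
  rw [intervalIntegrable_iff_integrableOn_Ioc_of_le hτ]
  exact (integrableOn_setIntegral_Ioc_triangle
    (integrable_indicator_triangle_abelKernel hα hβ hαβ hf)).congr_fun
    (fun _ hs => (abelIntegral_mul_rpow_sub hs.1.le).symm) measurableSet_Ioc

lemma abelIntegral_abelIntegral (hα : 0 < α) (hβ : 0 < β) (hαβ : 1 ≤ α + β) (hτ : 0 ≤ τ)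
    (hf : IntegrableOn f (Ioc 0 τ)) :
    abelIntegral β (abelIntegral α f) τ = beta α β * abelIntegral (α + β) f τ := calc
  abelIntegral β (abelIntegral α f) τ
      = ∫ s in Ioc 0 τ, ∫ r in Ioc 0 s, f r * ((s - r) ^ (α - 1) * (τ - s) ^ (β - 1)) := by
    rw [abelIntegral, intervalIntegral.integral_of_le hτ]
    exact setIntegral_congr_fun measurableSet_Ioc fun s hs => abelIntegral_mul_rpow_sub hs.1.le
  _ = ∫ r in Ioc 0 τ, ∫ s in Ioc r τ, f r * ((s - r) ^ (α - 1) * (τ - s) ^ (β - 1)) :=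
    integral_Ioc_triangle_swap (integrable_indicator_triangle_abelKernel hα hβ hαβ hf)
  _ = ∫ r in Ioc 0 τ, beta α β * (f r * (τ - r) ^ (α + β - 1)) := by
    refine setIntegral_congr_ae measurableSet_Ioc ?_
    filter_upwards [Measure.ae_ne _ τ] with r hrτ hr
    rw [integral_const_mul, setIntegral_sub_rpow_mul_rpow_sub hα hβ (lt_of_le_of_ne hr.2 hrτ)]
    ring
  _ = beta α β * abelIntegral (α + β) f τ := by
    rw [integral_const_mul, abelIntegral, intervalIntegral.integral_of_le hτ]

lemma abelIntegral_const_add_integral (hα : 0 < α) (hτ : 0 ≤ τ) (hf : IntegrableOn f (Ioc 0 τ)) :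
    abelIntegral α (fun s => c + ∫ r in (0:ℝ)..s, f r) τ
      = ∫ s in (0:ℝ)..τ, (c * s ^ (α - 1) + abelIntegral α f s) := by
  have hpow : IntervalIntegrable (fun s => s ^ (α - 1)) volume 0 τ :=
    intervalIntegral.intervalIntegrable_rpow' (by linarith)
  have hpow' : IntervalIntegrable (fun s => (τ - s) ^ (α - 1)) volume 0 τ :=
    (intervalIntegrable_iff_integrableOn_Ioc_of_le hτ).mpr (integrableOn_rpow_sub (by linarith))
  have hbeta : beta α 1 = beta 1 α := by simp only [beta, mul_comm, add_comm]
  have hreflect : ∫ s in (0:ℝ)..τ, (τ - s) ^ (α - 1) = ∫ s in (0:ℝ)..τ, s ^ (α - 1) := by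
    simpa using intervalIntegral.integral_comp_sub_left (fun s => s ^ (α - 1)) τ (a := 0) (b := τ)
  have hη : (fun s => c + ∫ r in (0:ℝ)..s, f r) = fun s => c + abelIntegral 1 f s := by
    simp only [abelIntegral_one]
  calc abelIntegral α (fun s => c + ∫ r in (0:ℝ)..s, f r) τ
      = c * (∫ s in (0:ℝ)..τ, (τ - s) ^ (α - 1)) + abelIntegral α (abelIntegral 1 f) τ := by
        rw [hη, abelIntegral]
        simp only [add_mul]
        rw [intervalIntegral.integral_add (hpow'.const_mul c)
          (intervalIntegrable_abelIntegral_mul_rpow_sub one_pos hα (by linarith) hτ hf),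
          intervalIntegral.integral_const_mul]
        rfl
    _ = c * (∫ s in (0:ℝ)..τ, s ^ (α - 1)) + abelIntegral 1 (abelIntegral α f) τ := by
        rw [hreflect, abelIntegral_abelIntegral one_pos hα (by linarith) hτ hf,
          abelIntegral_abelIntegral hα one_pos (by linarith) hτ hf, hbeta, add_comm α]
    _ = ∫ s in (0:ℝ)..τ, (c * s ^ (α - 1) + abelIntegral α f s) := by
        rw [intervalIntegral.integral_add (hpow.const_mul c) ?_,
          intervalIntegral.integral_const_mul]
        · simp [abelIntegral_one]
        · simpa using intervalIntegrable_abelIntegral_mul_rpow_sub hα one_pos (by linarith) hτ hf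

lemma abelIntegral_one_sub_rpow_add_abelIntegral (hα0 : 0 < α) (hα1 : α < 1) (hτ : 0 < τ)
    (hf : IntegrableOn f (Ioc 0 τ)) :
    abelIntegral (1 - α) (fun s => c * s ^ (α - 1) + abelIntegral α f s) τ
      = Real.Gamma α * Real.Gamma (1 - α) * (c + ∫ r in (0:ℝ)..τ, f r) := by
  have hβ : 0 < 1 - α := sub_pos.mpr hα1
  have hbeta : beta α (1 - α) = Real.Gamma α * Real.Gamma (1 - α) := by simp [beta]
  have hkernel : IntervalIntegrable (fun s => s ^ (α - 1) * (τ - s) ^ (1 - α - 1)) volume 0 τ := by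
    rw [intervalIntegrable_iff_integrableOn_Ioc_of_le hτ.le]
    simpa using integrableOn_sub_rpow_mul_rpow_sub (r := 0) (τ := τ) hα0 hβ
  have hsemi := intervalIntegrable_abelIntegral_mul_rpow_sub hα0 hβ (by linarith) hτ.le hf
  calc abelIntegral (1 - α) (fun s => c * s ^ (α - 1) + abelIntegral α f s) τ
      = c * (∫ s in (0:ℝ)..τ, s ^ (α - 1) * (τ - s) ^ (1 - α - 1))
          + abelIntegral (1 - α) (abelIntegral α f) τ := by
        rw [abelIntegral]
        simp only [add_mul, mul_assoc]
        rw [intervalIntegral.integral_add (hkernel.const_mul c) hsemi,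
          intervalIntegral.integral_const_mul]
        rfl
    _ = Real.Gamma α * Real.Gamma (1 - α) * (c + ∫ r in (0:ℝ)..τ, f r) := by
        rw [integral_rpow_mul_rpow_sub hα0 hβ hτ, abelIntegral_abelIntegral hα0 hβ (by linarith)
          hτ.le hf, add_sub_cancel, abelIntegral_one, hbeta, sub_self, Real.rpow_zero]
        ring

end Abel

theorem caputo_of_abel_integral_general (α T : ℝ) (hα0 : 0 < α) (hα1 : α < 1)
    (η : ℝ → ℝ) (hη : AbsContOn η 0 T) :
    ∀ t : ℝ, 0 < t → t ≤ T →
      caputoDeriv α (fun τ => ∫ s in (0:ℝ)..τ, η s * (τ - s) ^ (α - 1)) t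
        = Real.Gamma α * η t := by
  intro t ht htT
  obtain ⟨g, hg, hηg⟩ := hη
  have hgτ {τ : ℝ} (hτ : τ ≤ T) : IntegrableOn g (Ioc 0 τ) :=
    hg.mono_set (Ioc_subset_Icc_self.trans (Icc_subset_Icc_right hτ))
  set φ := fun s => η 0 * s ^ (α - 1) + abelIntegral α g s
  have hφ : IntervalIntegrable φ volume 0 t :=
    (intervalIntegral.intervalIntegrable_rpow' (by linarith)).const_mul _ |>.add <| by
      simpa using intervalIntegrable_abelIntegral_mul_rpow_sub hα0 one_pos (by linarith) ht.le
        (hgτ htT)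
  have hu : EqOn (abelIntegral α η) (fun τ => ∫ s in (0:ℝ)..τ, φ s) (Ioo 0 t) := fun τ hτ => by
    simp only [φ]
    rw [← abelIntegral_const_add_integral hα0 hτ.1.le (hgτ (hτ.2.le.trans htT))]
    refine intervalIntegral.integral_congr fun s hs => ?_
    rw [uIcc_of_le hτ.1.le] at hs
    rw [hηg s ⟨hs.1, hs.2.trans (hτ.2.le.trans htT)⟩]
  have hcaputo : ∫ s in (0:ℝ)..t, deriv (abelIntegral α η) s * (t - s) ^ (-α)
      = abelIntegral (1 - α) φ t := by
    rw [abelIntegral, sub_sub_cancel_left]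
    refine intervalIntegral.integral_congr_ae ?_
    filter_upwards [ae_deriv_eq_of_eqOn_integral hφ hu, Measure.ae_ne volume t] with s hs hst hmem
    rw [uIoc_of_le ht.le] at hmem
    rw [hs ⟨hmem.1, lt_of_le_of_ne hmem.2 hst⟩]
  have hΓ : Real.Gamma (1 - α) ≠ 0 := (Real.Gamma_pos_of_pos (by linarith)).ne'
  change caputoDeriv α (abelIntegral α η) t = _
  rw [caputoDeriv, hcaputo, abelIntegral_one_sub_rpow_add_abelIntegral hα0 hα1 ht (hgτ htT),
    ← hηg t ⟨ht.le, htT⟩]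
  field_simp

/-- For `0 < α < 1`, `T > 0` and `η` absolutely continuous on `[0,T]`,
`∂_t^α ∫_0^t η(s)(t−s)^{α−1} ds = Γ(α) η(t)` for every `0 < t ≤ T`. -/
theorem caputo_of_abel_integral (α T : ℝ) (hα0 : 0 < α) (hα1 : α < 1) (hT : 0 < T)
    (η : ℝ → ℝ) (hη : AbsContOn η 0 T) :
    ∀ t : ℝ, 0 < t → t ≤ T →
      caputoDeriv α (fun τ => ∫ s in (0:ℝ)..τ, η s * (τ - s) ^ (α - 1)) t
        = Real.Gamma α * η t :=
  caputo_of_abel_integral_general α T hα0 hα1 η hη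
end

section
/- Let 0 < α < 1 and let f be absolutely continuous on [a,b], with f′ an integrable function such that f(x) = f(a) + ∫_a^x f′(t) dt for all x ∈ [a,b]. Then the Riemann–Liouville fractional integral f_{1−α}(x) := (1/Γ(1−α)) ∫_a^x f(t) (x−t)^{−α} dt is absolutely continuous on [a,b], and for all x ∈ [a,b] it satisfies f_{1−α}(x) = (1/Γ(2−α)) [ f(a) (x−a)^{1−α} + ∫_a^x f′(t) (x−t)^{1−α} dt ]. -/
open MeasureTheory Set

/-- The Riemann–Liouville fractional integral of order `1−α` based at `a`:
`f_{1−α}(x) = (1/Γ(1−α)) ∫_a^x f(t) (x−t)^{−α} dt`. -/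
noncomputable def rlIntegral (α a : ℝ) (f : ℝ → ℝ) (x : ℝ) : ℝ :=
  (Real.Gamma (1 - α))⁻¹ * ∫ t in a..x, f t * (x - t) ^ (-α)

lemma ker_int_left {α : ℝ} (hα0 : 0 < α) (hα1 : α < 1) {s x : ℝ} (hsx : s ≤ x) :
    ∫ t in s..x, (x - t) ^ (-α) = (x - s) ^ (1 - α) / (1 - α) := by
  rw [intervalIntegral.integral_comp_sub_left (fun t => t ^ (-α)) x, sub_self,
    integral_rpow (Or.inl (by linarith)), Real.zero_rpow (by linarith)]
  ring_nf

lemma ker_int_right {α : ℝ} (hα0 : 0 < α) (hα1 : α < 1) {s x : ℝ} (hsx : s ≤ x) :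
    ∫ t in s..x, (t - s) ^ (-α) = (x - s) ^ (1 - α) / (1 - α) := by
  rw [intervalIntegral.integral_comp_sub_right (fun t => t ^ (-α)) s, sub_self,
    integral_rpow (Or.inl (by linarith)), Real.zero_rpow (by linarith)]
  ring_nf

lemma ker_ii_left {α : ℝ} (hα1 : α < 1) (s x : ℝ) :
    IntervalIntegrable (fun t => (x - t) ^ (-α)) volume s x := by
  have h := (intervalIntegral.intervalIntegrable_rpow' (a := x - s) (b := 0) (r := -α)
    (by linarith)).comp_sub_left x
  simpa using h

lemma ker_ii_right {α : ℝ} (hα1 : α < 1) (s x : ℝ) :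
    IntervalIntegrable (fun t => (t - s) ^ (-α)) volume s x := by
  have h := (intervalIntegral.intervalIntegrable_rpow' (a := 0) (b := x - s) (r := -α)
    (by linarith)).comp_sub_right s
  simpa using h

lemma ker_io_left {α : ℝ} (hα1 : α < 1) {s x : ℝ} (h : s ≤ x) :
    IntegrableOn (fun t => (x - t) ^ (-α)) (Ioc s x) := by
  have := (ker_ii_left hα1 s x (α := α)).1
  exact this

lemma ker_io_right {α : ℝ} (hα1 : α < 1) {s x : ℝ} (h : s ≤ x) :
    IntegrableOn (fun t => (t - s) ^ (-α)) (Ioc s x) := by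
  have := (ker_ii_right hα1 s x (α := α)).1
  exact this

lemma tri_swap (a x : ℝ) (g : ℝ → ℝ) (K : ℝ → ℝ → ℝ)
    (hInt : Integrable (fun p : ℝ × ℝ =>
      ({p : ℝ × ℝ | p.2 ∈ Ioc a p.1 ∧ p.1 ∈ Ioc a x}).indicator
        (fun p => g p.2 * K p.1 p.2) p) (volume.prod volume)) :
    ∫ t in Ioc a x, (∫ s in Ioc a t, g s * K t s)
      = ∫ s in Ioc a x, (∫ t in Ioc s x, g s * K t s) := by
  set T : Set (ℝ × ℝ) := {p : ℝ × ℝ | p.2 ∈ Ioc a p.1 ∧ p.1 ∈ Ioc a x} with hT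
  set F : ℝ × ℝ → ℝ := T.indicator (fun p => g p.2 * K p.1 p.2) with hF
  have h1 : ∀ t ∈ Ioc a x, (∫ s in Ioc a t, g s * K t s) = ∫ s, F (t, s) := by
    intro t ht
    rw [← integral_indicator measurableSet_Ioc]
    congr 1; funext s
    simp only [hF, indicator_apply]
    by_cases hs : s ∈ Ioc a t
    · rw [if_pos (show (t, s) ∈ T from ⟨hs, ht⟩), if_pos hs]
    · rw [if_neg (show (t, s) ∉ T by intro hc; obtain ⟨h1, -⟩ := hc; exact hs h1), if_neg hs]
  have h2 : ∀ s ∈ Ioc a x, (∫ t, F (t, s)) = ∫ t in Ioc s x, g s * K t s := by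
    intro s hs
    rw [← MeasureTheory.integral_Icc_eq_integral_Ioc, ← integral_indicator measurableSet_Icc]
    congr 1; funext t
    by_cases htx : t ∈ Icc s x
    · have has : a < s := hs.1
      have hm : (t, s) ∈ T := ⟨⟨has, htx.1⟩, lt_of_lt_of_le has htx.1, htx.2⟩
      rw [indicator_of_mem htx, hF, indicator_of_mem hm]
    · have hm : (t, s) ∉ T := by
        intro hc
        obtain ⟨⟨-, h1⟩, -, h2⟩ := hc
        exact htx ⟨h1, h2⟩
      rw [indicator_of_notMem htx, hF, indicator_of_notMem hm]
  calc ∫ t in Ioc a x, (∫ s in Ioc a t, g s * K t s)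
      = ∫ t in Ioc a x, ∫ s, F (t, s) := setIntegral_congr_fun measurableSet_Ioc h1
    _ = ∫ t, ∫ s, F (t, s) := by
        rw [← integral_indicator measurableSet_Ioc]
        congr 1; funext t
        by_cases ht : t ∈ Ioc a x
        · simp [indicator_of_mem, ht]
        · rw [indicator_of_notMem ht]
          have h0 : ∀ s, F (t, s) = 0 := by
            intro s
            apply indicator_of_notMem
            intro hc
            obtain ⟨-, h2⟩ := hc
            exact ht h2
          simp [h0]
    _ = ∫ s, ∫ t, F (t, s) := integral_integral_swap hInt
    _ = ∫ s in Ioc a x, ∫ t, F (t, s) := by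
        rw [← integral_indicator measurableSet_Ioc]
        congr 1; funext s
        by_cases hs : s ∈ Ioc a x
        · simp [indicator_of_mem, hs]
        · rw [indicator_of_notMem hs]
          have h0 : ∀ t, F (t, s) = 0 := by
            intro t
            apply indicator_of_notMem
            intro hc
            obtain ⟨⟨h1, h2⟩, -, h3⟩ := hc
            exact hs ⟨h1, le_trans h2 h3⟩
          simp [h0]
    _ = ∫ s in Ioc a x, ∫ t in Ioc s x, g s * K t s :=
        setIntegral_congr_fun measurableSet_Ioc h2

lemma T_meas (a x : ℝ) :
    MeasurableSet {p : ℝ × ℝ | p.2 ∈ Ioc a p.1 ∧ p.1 ∈ Ioc a x} := by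
  have h : {p : ℝ × ℝ | p.2 ∈ Ioc a p.1 ∧ p.1 ∈ Ioc a x}
      = ({p : ℝ × ℝ | a < p.2} ∩ {p : ℝ × ℝ | p.2 ≤ p.1}) ∩
        ({p : ℝ × ℝ | a < p.1} ∩ {p : ℝ × ℝ | p.1 ≤ x}) := by
    ext p
    simp [mem_Ioc, and_assoc]
  rw [h]
  exact ((measurableSet_lt measurable_const measurable_snd).inter
    (measurableSet_le measurable_snd measurable_fst)).inter
    ((measurableSet_lt measurable_const measurable_fst).inter
    (measurableSet_le measurable_fst measurable_const))

lemma slice_eq (a x : ℝ) (g : ℝ → ℝ) (K : ℝ → ℝ → ℝ) {t : ℝ} (ht : t ∈ Ioc a x) :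
    (∫ s, ({p : ℝ × ℝ | p.2 ∈ Ioc a p.1 ∧ p.1 ∈ Ioc a x}).indicator
        (fun p => g p.2 * K p.1 p.2) (t, s))
      = ∫ s in Ioc a t, g s * K t s := by
  rw [← integral_indicator measurableSet_Ioc]
  congr 1; funext s
  simp only [indicator_apply]
  by_cases hs : s ∈ Ioc a t
  · rw [if_pos (show ((t, s) : ℝ × ℝ) ∈ {p : ℝ × ℝ | p.2 ∈ Ioc a p.1 ∧ p.1 ∈ Ioc a x}
      from ⟨hs, ht⟩), if_pos hs]
  · rw [if_neg (show ((t, s) : ℝ × ℝ) ∉ {p : ℝ × ℝ | p.2 ∈ Ioc a p.1 ∧ p.1 ∈ Ioc a x}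
      by intro hc; obtain ⟨h1, -⟩ := hc; exact hs h1), if_neg hs]

lemma F_int_left {α : ℝ} (hα0 : 0 < α) (hα1 : α < 1) {a x : ℝ} (hax : a ≤ x)
    {g : ℝ → ℝ} (hgm : StronglyMeasurable g) (hgi : IntegrableOn g (Icc a x)) :
    Integrable (fun p : ℝ × ℝ =>
      ({p : ℝ × ℝ | p.2 ∈ Ioc a p.1 ∧ p.1 ∈ Ioc a x}).indicator
        (fun p => g p.2 * (x - p.1) ^ (-α)) p) (volume.prod volume) := by
  have hTm := T_meas a x
  have hmeas : AEStronglyMeasurable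
      (({p : ℝ × ℝ | p.2 ∈ Ioc a p.1 ∧ p.1 ∈ Ioc a x}).indicator
        (fun p => g p.2 * (x - p.1) ^ (-α))) (volume.prod volume) := by
    apply (Measurable.indicator ?_ hTm).aestronglyMeasurable
    have h1 : Measurable fun p : ℝ × ℝ => g p.2 := hgm.measurable.comp measurable_snd
    have h2 : Measurable fun p : ℝ × ℝ => (x - p.1) ^ (-α) := by fun_prop
    exact h1.mul h2
  have hBint : Integrable (fun p : ℝ × ℝ =>
      ((Ioc a x).indicator (fun t => (x - t) ^ (-α)) p.1) *
      ((Ioc a x).indicator (fun s => |g s|) p.2)) (volume.prod volume) := by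
    apply Integrable.mul_prod
    · exact (integrable_indicator_iff measurableSet_Ioc).2 (ker_io_left hα1 hax)
    · exact (integrable_indicator_iff measurableSet_Ioc).2
        ((hgi.mono_set Ioc_subset_Icc_self).abs)
  refine hBint.mono' hmeas (Filter.Eventually.of_forall fun p => ?_)
  by_cases hp : p ∈ {p : ℝ × ℝ | p.2 ∈ Ioc a p.1 ∧ p.1 ∈ Ioc a x}
  · rw [indicator_of_mem hp]
    obtain ⟨⟨h1, h2⟩, h3, h4⟩ := hp
    have hnn : 0 ≤ (x - p.1) ^ (-α) := Real.rpow_nonneg (by linarith) _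
    rw [indicator_of_mem (show p.1 ∈ Ioc a x from ⟨h3, h4⟩),
      indicator_of_mem (show p.2 ∈ Ioc a x from ⟨h1, le_trans h2 h4⟩)]
    rw [Real.norm_eq_abs, abs_mul, abs_of_nonneg hnn]
    exact le_of_eq (mul_comm _ _)
  · rw [indicator_of_notMem hp, norm_zero]
    exact mul_nonneg
      (indicator_nonneg (fun t ht => Real.rpow_nonneg (by linarith [ht.2]) _) _)
      (indicator_nonneg (fun s _ => abs_nonneg _) _)

lemma F_int_right {α : ℝ} (hα0 : 0 < α) (hα1 : α < 1) {a x : ℝ} (hax : a ≤ x)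
    {g : ℝ → ℝ} (hgm : StronglyMeasurable g) (hgi : IntegrableOn g (Icc a x)) :
    Integrable (fun p : ℝ × ℝ =>
      ({p : ℝ × ℝ | p.2 ∈ Ioc a p.1 ∧ p.1 ∈ Ioc a x}).indicator
        (fun p => g p.2 * (p.1 - p.2) ^ (-α)) p) (volume.prod volume) := by
  have hTm := T_meas a x
  have hmeas : AEStronglyMeasurable
      (({p : ℝ × ℝ | p.2 ∈ Ioc a p.1 ∧ p.1 ∈ Ioc a x}).indicator
        (fun p => g p.2 * (p.1 - p.2) ^ (-α))) (volume.prod volume) := by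
    apply (Measurable.indicator ?_ hTm).aestronglyMeasurable
    have h1 : Measurable fun p : ℝ × ℝ => g p.2 := hgm.measurable.comp measurable_snd
    have h2 : Measurable fun p : ℝ × ℝ => (p.1 - p.2) ^ (-α) := by fun_prop
    exact h1.mul h2
  have hC : Integrable (fun q : ℝ × ℝ =>
      ((Ioc 0 (x - a)).indicator (fun v => v ^ (-α)) q.1) *
      ((Ioc a x).indicator (fun s => |g s|) q.2)) (volume.prod volume) := by
    apply Integrable.mul_prod
    · exact (integrable_indicator_iff measurableSet_Ioc).2
        ((intervalIntegral.intervalIntegrable_rpow' (a := 0) (b := x - a) (r := -α)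
          (by linarith)).1)
    · exact (integrable_indicator_iff measurableSet_Ioc).2
        ((hgi.mono_set Ioc_subset_Icc_self).abs)
  have hBint : Integrable (fun p : ℝ × ℝ =>
      ((Ioc 0 (x - a)).indicator (fun v => v ^ (-α)) (p.1 - p.2)) *
      ((Ioc a x).indicator (fun s => |g s|) p.2)) (volume.prod volume) := by
    have := ((measurePreserving_sub_prod (volume : Measure ℝ)
      (volume : Measure ℝ)).integrable_comp hC.aestronglyMeasurable).2 hC
    exact this
  refine hBint.mono' hmeas (Filter.Eventually.of_forall fun p => ?_)
  by_cases hp : p ∈ {p : ℝ × ℝ | p.2 ∈ Ioc a p.1 ∧ p.1 ∈ Ioc a x}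
  · rw [indicator_of_mem hp]
    obtain ⟨⟨h1, h2⟩, h3, h4⟩ := hp
    rw [indicator_of_mem (show p.2 ∈ Ioc a x from ⟨h1, le_trans h2 h4⟩)]
    rcases eq_or_lt_of_le h2 with heq | hlt
    · rw [Real.norm_eq_abs, abs_mul, ← heq, sub_self,
        Real.zero_rpow (by linarith : -α ≠ 0), abs_zero, mul_zero]
      exact mul_nonneg
        (indicator_nonneg (fun v hv => Real.rpow_nonneg (le_of_lt hv.1) _) _)
        (abs_nonneg _)
    · rw [indicator_of_mem (show p.1 - p.2 ∈ Ioc 0 (x - a)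
        from ⟨by linarith, by linarith⟩)]
      have hnn : 0 ≤ (p.1 - p.2) ^ (-α) := Real.rpow_nonneg (by linarith) _
      rw [Real.norm_eq_abs, abs_mul, abs_of_nonneg hnn]
      exact le_of_eq (mul_comm _ _)
  · rw [indicator_of_notMem hp, norm_zero]
    exact mul_nonneg
      (indicator_nonneg (fun v hv => Real.rpow_nonneg (le_of_lt hv.1) _) _)
      (indicator_nonneg (fun s _ => abs_nonneg _) _)

lemma conv_integrableOn {α : ℝ} (hα0 : 0 < α) (hα1 : α < 1) {a b : ℝ} (hab : a ≤ b)
    {g : ℝ → ℝ} (hgm : StronglyMeasurable g) (hgi : IntegrableOn g (Icc a b)) :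
    IntegrableOn (fun u => ∫ t in Ioc a u, g t * (u - t) ^ (-α)) (Ioc a b) := by
  have hF := F_int_right hα0 hα1 hab hgm hgi
  have hM := hF.integral_prod_left
  refine (hM.integrableOn).congr_fun (fun u hu => ?_) measurableSet_Ioc
  exact slice_eq a b g (fun u t => (u - t) ^ (-α)) hu

lemma key_formula {α : ℝ} (hα0 : 0 < α) (hα1 : α < 1) {a x : ℝ} (hax : a ≤ x)
    {g : ℝ → ℝ} (hgm : StronglyMeasurable g) (hgi : IntegrableOn g (Icc a x)) :
    ∫ t in Ioc a x, (∫ s in Ioc a t, g s) * (x - t) ^ (-α)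
      = (∫ s in Ioc a x, g s * (x - s) ^ (1 - α)) / (1 - α) := by
  have h1 : ∀ t ∈ Ioc a x, (∫ s in Ioc a t, g s) * (x - t) ^ (-α)
      = ∫ s in Ioc a t, g s * (x - t) ^ (-α) :=
    fun t _ => (integral_mul_const _ _).symm
  rw [setIntegral_congr_fun measurableSet_Ioc h1,
    tri_swap a x g _ (F_int_left hα0 hα1 hax hgm hgi)]
  have h2 : ∀ s ∈ Ioc a x, (∫ t in Ioc s x, g s * (x - t) ^ (-α))
      = g s * (x - s) ^ (1 - α) / (1 - α) := by
    intro s hs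
    rw [integral_const_mul, ← intervalIntegral.integral_of_le hs.2,
      ker_int_left hα0 hα1 hs.2, mul_div_assoc]
  rw [setIntegral_congr_fun measurableSet_Ioc h2, integral_div]

lemma key_formula' {α : ℝ} (hα0 : 0 < α) (hα1 : α < 1) {a x : ℝ} (hax : a ≤ x)
    {g : ℝ → ℝ} (hgm : StronglyMeasurable g) (hgi : IntegrableOn g (Icc a x)) :
    ∫ u in Ioc a x, (∫ t in Ioc a u, g t * (u - t) ^ (-α))
      = (∫ t in Ioc a x, g t * (x - t) ^ (1 - α)) / (1 - α) := by
  rw [tri_swap a x g (fun u t => (u - t) ^ (-α)) (F_int_right hα0 hα1 hax hgm hgi)]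
  have h2 : ∀ s ∈ Ioc a x, (∫ u in Ioc s x, g s * (u - s) ^ (-α))
      = g s * (x - s) ^ (1 - α) / (1 - α) := by
    intro s hs
    rw [integral_const_mul, ← intervalIntegral.integral_of_le hs.2,
      ker_int_right hα0 hα1 hs.2, mul_div_assoc]
  rw [setIntegral_congr_fun measurableSet_Ioc h2, integral_div]

lemma main_formula {α : ℝ} (hα0 : 0 < α) (hα1 : α < 1) {a b : ℝ} {f g : ℝ → ℝ}
    (hgm : StronglyMeasurable g) (hgi : IntegrableOn g (Icc a b))
    (hfg : ∀ x ∈ Icc a b, f x = f a + ∫ t in Ioc a x, g t) {x : ℝ} (hx : x ∈ Icc a b) :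
    rlIntegral α a f x = (Real.Gamma (2 - α))⁻¹ *
      (f a * (x - a) ^ (1 - α) + ∫ t in Ioc a x, g t * (x - t) ^ (1 - α)) := by
  have hax : a ≤ x := hx.1
  have hgix : IntegrableOn g (Icc a x) := hgi.mono_set (Icc_subset_Icc_right hx.2)
  unfold rlIntegral
  rw [intervalIntegral.integral_of_le hax]
  have hstep : ∀ t ∈ Ioc a x, f t * (x - t) ^ (-α)
      = f a * (x - t) ^ (-α) + (∫ s in Ioc a t, g s) * (x - t) ^ (-α) := by
    intro t ht
    rw [hfg t ⟨le_of_lt ht.1, le_trans ht.2 hx.2⟩, add_mul]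
  rw [setIntegral_congr_fun measurableSet_Ioc hstep]
  have hint1 : IntegrableOn (fun t => f a * (x - t) ^ (-α)) (Ioc a x) :=
    (ker_io_left hα1 hax).const_mul _
  have hint2 : IntegrableOn (fun t => (∫ s in Ioc a t, g s) * (x - t) ^ (-α)) (Ioc a x) := by
    have hcont : ContinuousOn (fun t => ∫ s in Ioc a t, g s) (Icc a x) :=
      intervalIntegral.continuousOn_primitive hgix
    have hmeas : AEStronglyMeasurable (fun t => (∫ s in Ioc a t, g s) * (x - t) ^ (-α))
        (volume.restrict (Ioc a x)) := by
      apply AEStronglyMeasurable.mul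
      · exact (hcont.aestronglyMeasurable measurableSet_Icc).mono_measure
          (Measure.restrict_mono Ioc_subset_Icc_self le_rfl)
      · exact (show Measurable fun t : ℝ => (x - t) ^ (-α) by fun_prop).aestronglyMeasurable
    refine Integrable.mono' ((ker_io_left hα1 hax).const_mul (∫ s in Icc a x, |g s|))
      hmeas ?_
    refine (ae_restrict_iff' measurableSet_Ioc).2 (Filter.Eventually.of_forall fun t ht => ?_)
    rw [Real.norm_eq_abs, abs_mul]
    have hk : 0 ≤ (x - t) ^ (-α) := Real.rpow_nonneg (by linarith [ht.2]) _
    rw [abs_of_nonneg hk]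
    have hb : |∫ s in Ioc a t, g s| ≤ ∫ s in Icc a x, |g s| := by
      calc |∫ s in Ioc a t, g s| ≤ ∫ s in Ioc a t, |g s| := by
            simpa [Real.norm_eq_abs] using
              norm_integral_le_integral_norm (μ := volume.restrict (Ioc a t)) g
        _ ≤ ∫ s in Icc a x, |g s| := by
            apply setIntegral_mono_set hgix.abs
              (Filter.Eventually.of_forall fun s => abs_nonneg _)
            exact HasSubset.Subset.eventuallyLE
              (subset_trans (Ioc_subset_Ioc_right ht.2) Ioc_subset_Icc_self)
    exact mul_le_mul_of_nonneg_right hb hk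
  rw [integral_add hint1 hint2, integral_const_mul, key_formula hα0 hα1 hax hgm hgix,
    ← intervalIntegral.integral_of_le hax, ker_int_left hα0 hα1 hax]
  have hΓ : Real.Gamma (2 - α) = (1 - α) * Real.Gamma (1 - α) := by
    have h2 : (2:ℝ) - α = (1 - α) + 1 := by ring
    rw [h2, Real.Gamma_add_one (by linarith : (1:ℝ) - α ≠ 0)]
  have hΓpos : 0 < Real.Gamma (1 - α) := Real.Gamma_pos_of_pos (by linarith)
  rw [hΓ]
  have h1α : (1:ℝ) - α ≠ 0 := by linarith
  rw [mul_inv, div_eq_inv_mul, div_eq_inv_mul]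
  ring

/-- Let `0 < α < 1` and let `f` be absolutely continuous on `[a,b]`, with integrable `f'`
such that `f x = f a + ∫_a^x f'`. Then `f_{1−α}` is absolutely continuous on `[a,b]` and
`f_{1−α}(x) = (1/Γ(2−α)) [ f(a)(x−a)^{1−α} + ∫_a^x f'(t)(x−t)^{1−α} dt ]` on `[a,b]`. -/
theorem rlIntegral_of_absolutely_continuous (α a b : ℝ)
    (hα0 : 0 < α) (hα1 : α < 1) (hab : a < b)
    (f f' : ℝ → ℝ) (hf' : IntegrableOn f' (Icc a b))
    (hf : ∀ x ∈ Icc a b, f x = f a + ∫ t in a..x, f' t) :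
    AbsContOn (rlIntegral α a f) a b ∧
    ∀ x ∈ Icc a b, rlIntegral α a f x
      = (Real.Gamma (2 - α))⁻¹ *
        (f a * (x - a) ^ (1 - α) + ∫ t in a..x, f' t * (x - t) ^ (1 - α)) := by
  set g := hf'.1.mk f' with hgdef
  have hgm : StronglyMeasurable g := hf'.1.stronglyMeasurable_mk
  have hae : f' =ᵐ[volume.restrict (Icc a b)] g := hf'.1.ae_eq_mk
  have hgi : IntegrableOn g (Icc a b) := hf'.congr hae
  have hab' : a ≤ b := le_of_lt hab
  have h1α : (0:ℝ) < 1 - α := by linarith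
  have haeIoc : ∀ x ∈ Icc a b, f' =ᵐ[volume.restrict (Ioc a x)] g := fun x hx =>
    ae_restrict_of_ae_restrict_of_subset
      (subset_trans Ioc_subset_Icc_self (Icc_subset_Icc_right hx.2)) hae
  have hfg : ∀ x ∈ Icc a b, f x = f a + ∫ t in Ioc a x, g t := by
    intro x hx
    rw [hf x hx, intervalIntegral.integral_of_le hx.1]
    congr 1
    exact integral_congr_ae (haeIoc x hx)
  have hconv : ∀ x ∈ Icc a b, (∫ t in a..x, f' t * (x - t) ^ (1 - α))
      = ∫ t in Ioc a x, g t * (x - t) ^ (1 - α) := by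
    intro x hx
    rw [intervalIntegral.integral_of_le hx.1]
    exact integral_congr_ae ((haeIoc x hx).mono fun t ht => by simp only [ht])
  have formula : ∀ x ∈ Icc a b, rlIntegral α a f x
      = (Real.Gamma (2 - α))⁻¹ *
        (f a * (x - a) ^ (1 - α) + ∫ t in a..x, f' t * (x - t) ^ (1 - α)) := by
    intro x hx
    rw [main_formula hα0 hα1 hgm hgi hfg hx, hconv x hx]
  refine ⟨?_, formula⟩
  refine ⟨fun s => (Real.Gamma (2 - α))⁻¹ *
    ((1 - α) * (f a * (s - a) ^ (-α) + ∫ t in Ioc a s, g t * (s - t) ^ (-α))), ?_, ?_⟩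
  · rw [integrableOn_Icc_iff_integrableOn_Ioc]
    apply Integrable.const_mul
    apply Integrable.const_mul
    exact ((ker_io_right hα1 hab').const_mul (f a)).add
      (conv_integrableOn hα0 hα1 hab' hgm hgi)
  · intro x hx
    have hax : a ≤ x := hx.1
    have h0 : rlIntegral α a f a = 0 := by
      unfold rlIntegral
      rw [intervalIntegral.integral_same, mul_zero]
    rw [h0, zero_add, intervalIntegral.integral_of_le hax]
    have hA : IntegrableOn (fun s => f a * (s - a) ^ (-α)) (Ioc a x) :=
      (ker_io_right hα1 hax).const_mul _
    have hQ : IntegrableOn (fun s => ∫ t in Ioc a s, g t * (s - t) ^ (-α)) (Ioc a x) :=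
      (conv_integrableOn hα0 hα1 hab' hgm hgi).mono_set (Ioc_subset_Ioc_right hx.2)
    rw [integral_const_mul, integral_const_mul, integral_add hA hQ, integral_const_mul,
      ← intervalIntegral.integral_of_le hax, ker_int_right hα0 hα1 hax,
      key_formula' hα0 hα1 hax hgm (hgi.mono_set (Icc_subset_Icc_right hx.2)),
      formula x hx, hconv x hx]
    rw [div_eq_inv_mul, div_eq_inv_mul]
    have h1α' : (1 - α) ≠ 0 := ne_of_gt h1α
    field_simp
end

section
/- Let l > 0, let p ∈ C¹([0,l]) with p(x) > 0 on [0,l], and let q ∈ C([0,l]) with q(x) ≥ 0 on [0,l]. Let (X_j)_{j≥1} ⊂ C²([0,l]) and (λ_j)_{j≥1} be pairwise distinct eigenvalues such that (p X_j′)′ − q X_j = −λ_j X_j on [0,l], X_j(0) = X_j(l) = 0, and ∫_0^l X_j(x) X_k(x) dx = δ_{jk} (orthonormality). Let φ ∈ C¹([0,l]) with φ(0) = φ(l) = 0, and set φ_j = ∫_0^l φ(x) X_j(x) dx. Then the series ∑_{j=1}^∞ λ_j φ_j² converges and ∑_{j=1}^∞ λ_j φ_j² ≤ ∫_0^l [ p(x)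 (φ′(x))² + q(x) φ(x)² ] dx. -/
/-!
Write `B(u, v) = ∫ p u′ v′ + q u v`. Integrating by parts against the eigenvalue equation gives
`B(X_j, v) = λ_j ∫ X_j v` for every `C¹` function `v` vanishing at the endpoints; in
particular `λ_j = B(X_j, X_j) ≥ 0`. For the remainder `ψ = φ - ∑_{j<N} φ_j X_j` of the partial
Fourier expansion, orthonormality gives `B(X_j, ψ) = 0` for `j < N`, so expanding
`0 ≤ B(ψ, ψ)` yields `∑_{j<N} λ_j φ_j² ≤ B(φ, φ)`. The partial sums have nonnegative terms
and are bounded.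
-/

open MeasureTheory Set

/-- The Dirichlet-type energy functional `J(Y) = ∫_0^l [p (Y′)² + q Y²] dx`. -/
noncomputable def energyJ (l : ℝ) (p q Y : ℝ → ℝ) : ℝ :=
  ∫ x in (0:ℝ)..l, (p x * deriv Y x ^ 2 + q x * Y x ^ 2)

open intervalIntegral

structure IsC1On (a b : ℝ) (u : ℝ → ℝ) : Prop where
  differentiableAt : ∀ x ∈ Icc a b, DifferentiableAt ℝ u x
  continuousOn_deriv : ContinuousOn (deriv u) (Icc a b)

structure IsDirichletEigenfunction (a b : ℝ) (p q : ℝ → ℝ) (μ : ℝ) (Y : ℝ → ℝ) : Prop where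
  differentiableAt : ∀ x ∈ Icc a b, DifferentiableAt ℝ Y x
  differentiableAt_deriv : ∀ x ∈ Icc a b, DifferentiableAt ℝ (deriv Y) x
  eq : ∀ x ∈ Icc a b, deriv (fun y => p y * deriv Y y) x - q x * Y x = -μ * Y x
  left : Y a = 0
  right : Y b = 0

noncomputable def sturmLiouvilleForm (a b : ℝ) (p q u v : ℝ → ℝ) : ℝ :=
  ∫ x in a..b, p x * deriv u x * deriv v x + q x * u x * v x

variable {a b : ℝ}

namespace IsC1On

variable {u : ℝ → ℝ}

theorem continuousOn (hu : IsC1On a b u) : ContinuousOn u (Icc a b) :=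
  fun x hx => (hu.differentiableAt x hx).continuousAt.continuousWithinAt

variable {ι : Type*} {s : Finset ι} {c : ι → ℝ} {Y : ι → ℝ → ℝ}

theorem hasDerivAt_sub_sum (hu : IsC1On a b u) (hY : ∀ j ∈ s, IsC1On a b (Y j)) {x : ℝ}
    (hx : x ∈ Icc a b) :
    HasDerivAt (fun y => u y - ∑ j ∈ s, c j * Y j y)
      (deriv u x - ∑ j ∈ s, c j * deriv (Y j) x) x :=
  (hu.differentiableAt x hx).hasDerivAt.sub <| HasDerivAt.fun_sum fun j hj =>
    ((hY j hj).differentiableAt x hx).hasDerivAt.const_mul (c j)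

theorem sub_sum (hu : IsC1On a b u) (hY : ∀ j ∈ s, IsC1On a b (Y j)) :
    IsC1On a b (fun y => u y - ∑ j ∈ s, c j * Y j y) where
  differentiableAt _ hx := (hu.hasDerivAt_sub_sum hY hx).differentiableAt
  continuousOn_deriv :=
    (hu.continuousOn_deriv.sub <| continuousOn_finsetSum _ fun j hj =>
      continuousOn_const.mul (hY j hj).continuousOn_deriv).congr
      fun _ hx => (hu.hasDerivAt_sub_sum hY hx).deriv

end IsC1On

theorem IsDirichletEigenfunction.isC1On {p q : ℝ → ℝ} {μ : ℝ} {Y : ℝ → ℝ}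
    (hY : IsDirichletEigenfunction a b p q μ Y) : IsC1On a b Y :=
  ⟨hY.differentiableAt,
    fun x hx => (hY.differentiableAt_deriv x hx).continuousAt.continuousWithinAt⟩

section sturmLiouvilleForm

variable {p q : ℝ → ℝ}

theorem sturmLiouvilleForm_comm (u v : ℝ → ℝ) :
    sturmLiouvilleForm a b p q u v = sturmLiouvilleForm a b p q v u := by
  unfold sturmLiouvilleForm
  congr 1
  ext x
  ring

theorem sturmLiouvilleForm_self_nonneg (hab : a ≤ b) (hp : ∀ x ∈ Icc a b, 0 ≤ p x)
    (hq : ∀ x ∈ Icc a b, 0 ≤ q x) (u : ℝ → ℝ) : 0 ≤ sturmLiouvilleForm a b p q u u := by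
  refine integral_nonneg hab fun x hx => ?_
  rw [mul_assoc, mul_assoc]
  exact add_nonneg (mul_nonneg (hp x hx) (mul_self_nonneg _))
    (mul_nonneg (hq x hx) (mul_self_nonneg _))

theorem intervalIntegrable_sturmLiouvilleForm_integrand (hab : a ≤ b)
    (hp : ContinuousOn p (Icc a b)) (hq : ContinuousOn q (Icc a b)) {u v : ℝ → ℝ}
    (hu : IsC1On a b u) (hv : IsC1On a b v) :
    IntervalIntegrable (fun x => p x * deriv u x * deriv v x + q x * u x * v x) volume a b :=
  (((hp.mul hu.continuousOn_deriv).mul hv.continuousOn_deriv).add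
    ((hq.mul hu.continuousOn).mul hv.continuousOn)).intervalIntegrable_of_Icc hab

theorem sturmLiouvilleForm_sub_sum_left {ι : Type*} (hab : a ≤ b) (hp : ContinuousOn p (Icc a b))
    (hq : ContinuousOn q (Icc a b)) {u v : ℝ → ℝ} {Y : ι → ℝ → ℝ} (s : Finset ι) (c : ι → ℝ)
    (hu : IsC1On a b u) (hY : ∀ j ∈ s, IsC1On a b (Y j)) (hv : IsC1On a b v) :
    sturmLiouvilleForm a b p q (fun y => u y - ∑ j ∈ s, c j * Y j y) v =
      sturmLiouvilleForm a b p q u v - ∑ j ∈ s, c j * sturmLiouvilleForm a b p q (Y j) v := by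
  have hpointwise : ∀ x ∈ uIcc a b,
      p x * deriv (fun y => u y - ∑ j ∈ s, c j * Y j y) x * deriv v x +
          q x * (u x - ∑ j ∈ s, c j * Y j x) * v x =
        (p x * deriv u x * deriv v x + q x * u x * v x) -
          ∑ j ∈ s, c j * (p x * deriv (Y j) x * deriv v x + q x * Y j x * v x) := by
    intro x hx
    rw [(hu.hasDerivAt_sub_sum hY (uIcc_of_le hab ▸ hx)).deriv]
    have hsum : ∑ j ∈ s, c j * (p x * deriv (Y j) x * deriv v x + q x * Y j x * v x) =
        p x * (∑ j ∈ s, c j * deriv (Y j) x) * deriv v x +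
          q x * (∑ j ∈ s, c j * Y j x) * v x := by
      simp only [Finset.mul_sum, Finset.sum_mul, ← Finset.sum_add_distrib]
      exact Finset.sum_congr rfl fun _ _ => by ring
    linear_combination hsum
  have hint := fun j (hj : j ∈ s) =>
    (intervalIntegrable_sturmLiouvilleForm_integrand hab hp hq (hY j hj) hv).const_mul (c j)
  unfold sturmLiouvilleForm
  rw [integral_congr hpointwise,
    integral_sub (intervalIntegrable_sturmLiouvilleForm_integrand hab hp hq hu hv)
      (by simpa only [Finset.sum_fn] using IntervalIntegrable.sum s hint),
    integral_finsetSum hint]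
  simp only [intervalIntegral.integral_const_mul]

theorem sturmLiouvilleForm_eq_of_isDirichletEigenfunction (hab : a ≤ b)
    (hp : ∀ x ∈ Icc a b, DifferentiableAt ℝ p x) (hq : ContinuousOn q (Icc a b)) {μ : ℝ}
    {Y v : ℝ → ℝ} (hY : IsDirichletEigenfunction a b p q μ Y) (hv : IsC1On a b v)
    (hva : v a = 0) (hvb : v b = 0) :
    sturmLiouvilleForm a b p q Y v = μ * ∫ x in a..b, Y x * v x := by
  have hflux : ∀ x ∈ Icc a b, HasDerivAt (fun y => p y * deriv Y y) ((q x - μ) * Y x) x := by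
    intro x hx
    have h : HasDerivAt (fun y => p y * deriv Y y) (deriv (fun y => p y * deriv Y y) x) x :=
      ((hp x hx).mul (hY.differentiableAt_deriv x hx)).hasDerivAt
    rwa [show deriv (fun y => p y * deriv Y y) x = (q x - μ) * Y x by
      linear_combination hY.eq x hx] at h
  have hderiv : ∀ x ∈ uIcc a b, HasDerivAt (fun y => p y * deriv Y y * v y)
      ((q x - μ) * Y x * v x + p x * deriv Y x * deriv v x) x := fun x hx =>
    (hflux x (uIcc_of_le hab ▸ hx)).mul (hv.differentiableAt x (uIcc_of_le hab ▸ hx)).hasDerivAt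
  have hpc : ContinuousOn p (Icc a b) := fun x hx => (hp x hx).continuousAt.continuousWithinAt
  have hYC1 := hY.isC1On
  have hint₁ : IntervalIntegrable
      (fun x => (q x - μ) * Y x * v x + p x * deriv Y x * deriv v x) volume a b :=
    ((((hq.sub continuousOn_const).mul hYC1.continuousOn).mul hv.continuousOn).add
      ((hpc.mul hYC1.continuousOn_deriv).mul hv.continuousOn_deriv)).intervalIntegrable_of_Icc
      hab
  have hint₂ : IntervalIntegrable (fun x => μ * (Y x * v x)) volume a b :=
    (continuousOn_const.mul (hYC1.continuousOn.mul hv.continuousOn)).intervalIntegrable_of_Icc hab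
  calc sturmLiouvilleForm a b p q Y v
      = ∫ x in a..b,
          ((q x - μ) * Y x * v x + p x * deriv Y x * deriv v x) + μ * (Y x * v x) := by
        unfold sturmLiouvilleForm
        congr 1
        ext x
        ring
    _ = μ * ∫ x in a..b, Y x * v x := by
        rw [integral_add hint₁ hint₂, integral_eq_sub_of_hasDerivAt hderiv hint₁,
          intervalIntegral.integral_const_mul, hva, hvb]
        ring

end sturmLiouvilleForm

theorem integral_mul_sub_sum_orthonormal {ι : Type*} [DecidableEq ι] (hab : a ≤ b)
    {X : ι → ℝ → ℝ} {φ : ℝ → ℝ} (hX : ∀ j, ContinuousOn (X j) (Icc a b))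
    (hφ : ContinuousOn φ (Icc a b))
    (horth : ∀ j k, (∫ x in a..b, X j x * X k x) = if j = k then 1 else 0)
    {s : Finset ι} {j : ι} (hj : j ∈ s) :
    ∫ x in a..b, X j x * (φ x - ∑ k ∈ s, (∫ z in a..b, φ z * X k z) * X k x) = 0 := by
  have hint : ∀ k ∈ s, IntervalIntegrable
      (fun x => (∫ z in a..b, φ z * X k z) * (X j x * X k x)) volume a b := fun k _ =>
    (((hX j).mul (hX k)).intervalIntegrable_of_Icc hab).const_mul _
  calc ∫ x in a..b, X j x * (φ x - ∑ k ∈ s, (∫ z in a..b, φ z * X k z) * X k x)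
      = ∫ x in a..b, φ x * X j x - ∑ k ∈ s, (∫ z in a..b, φ z * X k z) * (X j x * X k x) := by
        refine integral_congr fun x _ => ?_
        simp only [mul_sub, Finset.mul_sum]
        congr 1
        · ring
        · exact Finset.sum_congr rfl fun _ _ => by ring
    _ = 0 := by
        rw [integral_sub ((hφ.fun_mul (hX j)).intervalIntegrable_of_Icc hab)
          (by simpa only [Finset.sum_fn] using IntervalIntegrable.sum s hint),
          integral_finsetSum hint]
        simp [intervalIntegral.integral_const_mul, horth, hj]

section Bessel

variable {p q : ℝ → ℝ} (hab : a ≤ b) (hp_diff : ∀ x ∈ Icc a b, DifferentiableAt ℝ p x)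
  (hp_nonneg : ∀ x ∈ Icc a b, 0 ≤ p x) (hq_cont : ContinuousOn q (Icc a b))
  (hq_nonneg : ∀ x ∈ Icc a b, 0 ≤ q x)
include hab hp_diff hp_nonneg hq_cont hq_nonneg

theorem IsDirichletEigenfunction.eigenvalue_nonneg {μ : ℝ} {Y : ℝ → ℝ}
    (hY : IsDirichletEigenfunction a b p q μ Y) (hnorm : ∫ x in a..b, Y x * Y x = 1) :
    0 ≤ μ := by
  have h := sturmLiouvilleForm_self_nonneg hab hp_nonneg hq_nonneg Y
  rwa [sturmLiouvilleForm_eq_of_isDirichletEigenfunction hab hp_diff hq_cont hY hY.isC1On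
    hY.left hY.right, hnorm, mul_one] at h

theorem sum_eigenvalue_mul_sq_le_sturmLiouvilleForm {ι : Type*} [DecidableEq ι]
    {X : ι → ℝ → ℝ} {lam : ι → ℝ} {φ : ℝ → ℝ}
    (hX : ∀ j, IsDirichletEigenfunction a b p q (lam j) (X j))
    (horth : ∀ j k, (∫ x in a..b, X j x * X k x) = if j = k then 1 else 0)
    (hφ : IsC1On a b φ) (hφa : φ a = 0) (hφb : φ b = 0) (s : Finset ι) :
    ∑ j ∈ s, lam j * (∫ z in a..b, φ z * X j z) ^ 2 ≤ sturmLiouvilleForm a b p q φ φ := by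
  set c : ι → ℝ := fun j => ∫ z in a..b, φ z * X j z
  set ψ : ℝ → ℝ := fun y => φ y - ∑ j ∈ s, c j * X j y
  have hpc : ContinuousOn p (Icc a b) := fun x hx =>
    (hp_diff x hx).continuousAt.continuousWithinAt
  have hXC1 : ∀ j ∈ s, IsC1On a b (X j) := fun j _ => (hX j).isC1On
  have hψ : IsC1On a b ψ := hφ.sub_sum hXC1
  have hψa : ψ a = 0 := by simp [ψ, hφa, fun j => (hX j).left]
  have hψb : ψ b = 0 := by simp [ψ, hφb, fun j => (hX j).right]
  have hXψ : ∀ j ∈ s, sturmLiouvilleForm a b p q (X j) ψ = 0 := fun j hj => by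
    rw [sturmLiouvilleForm_eq_of_isDirichletEigenfunction hab hp_diff hq_cont (hX j) hψ hψa hψb,
      integral_mul_sub_sum_orthonormal hab (fun k => (hX k).isC1On.continuousOn) hφ.continuousOn
        horth hj, mul_zero]
  have hXφ : ∀ j, sturmLiouvilleForm a b p q (X j) φ = lam j * c j := fun j => by
    rw [sturmLiouvilleForm_eq_of_isDirichletEigenfunction hab hp_diff hq_cont (hX j) hφ hφa hφb]
    simp only [c, mul_comm (X j _)]
  have hexpand : sturmLiouvilleForm a b p q ψ ψ =
      sturmLiouvilleForm a b p q φ φ - ∑ j ∈ s, lam j * c j ^ 2 := by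
    rw [sturmLiouvilleForm_sub_sum_left hab hpc hq_cont s c hφ hXC1 hψ,
      Finset.sum_eq_zero fun j hj => by rw [hXψ j hj, mul_zero], sub_zero,
      sturmLiouvilleForm_comm, sturmLiouvilleForm_sub_sum_left hab hpc hq_cont s c hφ hXC1 hφ]
    simp only [hXφ]
    congr 1
    exact Finset.sum_congr rfl fun _ _ => by ring
  linarith [sturmLiouvilleForm_self_nonneg hab hp_nonneg hq_nonneg ψ]

end Bessel

theorem energyJ_eq_sturmLiouvilleForm (l : ℝ) (p q Y : ℝ → ℝ) :
    energyJ l p q Y = sturmLiouvilleForm 0 l p q Y Y := by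
  unfold energyJ sturmLiouvilleForm
  congr 1
  ext x
  ring

theorem bessel_inequality_eigenvalues_general (l : ℝ) (hl : 0 < l)
    (p q φ : ℝ → ℝ) (X : ℕ → ℝ → ℝ) (lam : ℕ → ℝ)
    (hp_diff : ∀ x ∈ Icc 0 l, DifferentiableAt ℝ p x)
    (hp_pos : ∀ x ∈ Icc 0 l, 0 < p x)
    (hq_cont : ContinuousOn q (Icc 0 l))
    (hq_nonneg : ∀ x ∈ Icc 0 l, 0 ≤ q x)
    (hX_diff : ∀ j, ∀ x ∈ Icc 0 l, DifferentiableAt ℝ (X j) x)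
    (hX_diff2 : ∀ j, ∀ x ∈ Icc 0 l, DifferentiableAt ℝ (deriv (X j)) x)
    (heig : ∀ j, ∀ x ∈ Icc 0 l,
      deriv (fun y => p y * deriv (X j) y) x - q x * X j x = -lam j * X j x)
    (hbc : ∀ j, X j 0 = 0 ∧ X j l = 0)
    (horth : ∀ j k, (∫ x in (0:ℝ)..l, X j x * X k x) = if j = k then 1 else 0)
    (hφ_diff : ∀ x ∈ Icc 0 l, DifferentiableAt ℝ φ x)
    (hφ_cont : ContinuousOn (deriv φ) (Icc 0 l))
    (hφ0 : φ 0 = 0) (hφl : φ l = 0) :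
    Summable (fun j => lam j * (∫ z in (0:ℝ)..l, φ z * X j z) ^ 2) ∧
      ∑' j : ℕ, lam j * (∫ z in (0:ℝ)..l, φ z * X j z) ^ 2 ≤ energyJ l p q φ := by
  have hp_nonneg : ∀ x ∈ Icc 0 l, 0 ≤ p x := fun x hx => (hp_pos x hx).le
  have hX : ∀ j, IsDirichletEigenfunction 0 l p q (lam j) (X j) := fun j =>
    ⟨hX_diff j, hX_diff2 j, heig j, (hbc j).1, (hbc j).2⟩
  have hterm_nonneg : ∀ j, 0 ≤ lam j * (∫ z in (0:ℝ)..l, φ z * X j z) ^ 2 := fun j =>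
    mul_nonneg ((hX j).eigenvalue_nonneg hl.le hp_diff hp_nonneg hq_cont hq_nonneg
      (by simp [horth])) (sq_nonneg _)
  have hpartial : ∀ N, ∑ j ∈ Finset.range N, lam j * (∫ z in (0:ℝ)..l, φ z * X j z) ^ 2 ≤
      energyJ l p q φ := fun N => by
    rw [energyJ_eq_sturmLiouvilleForm]
    exact sum_eigenvalue_mul_sq_le_sturmLiouvilleForm hl.le hp_diff hp_nonneg hq_cont hq_nonneg
      hX horth ⟨hφ_diff, hφ_cont⟩ hφ0 hφl _
  have hsummable := summable_of_sum_range_le hterm_nonneg hpartial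
  exact ⟨hsummable, hsummable.tsum_le_of_sum_range_le hpartial⟩

/-- Bessel-type inequality: for an orthonormal family of Sturm–Liouville eigenfunctions
`(X_j)` with pairwise distinct eigenvalues `(λ_j)` and `φ ∈ C¹([0,l])` vanishing at the
endpoints, with Fourier coefficients `φ_j = ∫_0^l φ X_j`, the series `∑ λ_j φ_j²`
converges and `∑_{j=1}^∞ λ_j φ_j² ≤ ∫_0^l [p (φ′)² + q φ²] dx`. -/
theorem bessel_inequality_eigenvalues (l : ℝ) (hl : 0 < l)
    (p q φ : ℝ → ℝ) (X : ℕ → ℝ → ℝ) (lam : ℕ → ℝ)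
    (hp_diff : ∀ x ∈ Icc 0 l, DifferentiableAt ℝ p x)
    (hp_cont : ContinuousOn (deriv p) (Icc 0 l))
    (hp_pos : ∀ x ∈ Icc 0 l, 0 < p x)
    (hq_cont : ContinuousOn q (Icc 0 l))
    (hq_nonneg : ∀ x ∈ Icc 0 l, 0 ≤ q x)
    (hX_diff : ∀ j, ∀ x ∈ Icc 0 l, DifferentiableAt ℝ (X j) x)
    (hX_diff2 : ∀ j, ∀ x ∈ Icc 0 l, DifferentiableAt ℝ (deriv (X j)) x)
    (hX_cont2 : ∀ j, ContinuousOn (deriv (deriv (X j))) (Icc 0 l))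
    (heig : ∀ j, ∀ x ∈ Icc 0 l,
      deriv (fun y => p y * deriv (X j) y) x - q x * X j x = -lam j * X j x)
    (hbc : ∀ j, X j 0 = 0 ∧ X j l = 0)
    (hdistinct : Function.Injective lam)
    (horth : ∀ j k, (∫ x in (0:ℝ)..l, X j x * X k x) = if j = k then 1 else 0)
    (hφ_diff : ∀ x ∈ Icc 0 l, DifferentiableAt ℝ φ x)
    (hφ_cont : ContinuousOn (deriv φ) (Icc 0 l))
    (hφ0 : φ 0 = 0) (hφl : φ l = 0) :
    Summable (fun j => lam j * (∫ z in (0:ℝ)..l, φ z * X j z) ^ 2) ∧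
      ∑' j : ℕ, lam j * (∫ z in (0:ℝ)..l, φ z * X j z) ^ 2 ≤ energyJ l p q φ :=
  bessel_inequality_eigenvalues_general l hl p q φ X lam hp_diff hp_pos hq_cont hq_nonneg hX_diff
    hX_diff2 heig hbc horth hφ_diff hφ_cont hφ0 hφl
end
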